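/- Let A₁,…,A_k be bounded operators on H. For every *-polynomial p in k operator variables, ‖p(A₁,…,A_k)‖ ≤ ‖p(Ψ_{A₁},…,Ψ_{A_k})‖. (This is the step 'ψ̃ majorizes ψ': in the paper it is proved by realizing Ψ_{A_i} = ψ(e_i)⊗U as unitarily equivalent, via the Fourier transform in the second variable, to the direct integral over λ ∈ 𝕋 of the scaled operators λ·A_i, and evaluating at λ = 1.) -/

import Mathlib

open MeasureTheory ContinuousLinearMap

/-- Evaluation of a word in formal letters `x i` (`b = false`) and `x i *` (`b = true`)
at the tuple of operators `T`. -/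
noncomputable def evalWord {k : ℕ} {H : Type*} [NormedAddCommGroup H] [InnerProductSpace ℂ H]
    [CompleteSpace H] (T : Fin k → H →L[ℂ] H) : List (Fin k × Bool) → H →L[ℂ] H
  | [] => 1
  | (i, b) :: w => (if b then adjoint (T i) else T i) * evalWord T w

/-- A *-polynomial in `k` operator variables is a finite ℂ-linear combination of words;
`evalPoly T p` is its evaluation at the operators `T 0, ..., T (k-1)`. -/
noncomputable def evalPoly {k : ℕ} {H : Type*} [NormedAddCommGroup H] [InnerProductSpace ℂ H]
    [CompleteSpace H] (T : Fin k → H →L[ℂ] H) (p : List (ℂ × List (Fin k × Bool))) : H →L[ℂ] H :=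
  (p.map fun cw => cw.1 • evalWord T cw.2).sum

/-- The degree of a *-polynomial: the maximal length of a word occurring in it. -/
def polyDegree {k : ℕ} (p : List (ℂ × List (Fin k × Bool))) : ℕ :=
  (p.map fun cw => cw.2.length).foldr max 0

/-!
Let `d` be the degree of `p`. Each letter `Ψ_{A i}` moves coordinates one step up and acts by
`A i`; its adjoint moves them one step down and acts by `(A i)†`. Hence a word `w` evaluated at the
`Ψ_{A i}` sends `ξ` to the sequence `n ↦ w(A) (ξ (n - s))`, where `s` is the signed shift of `w`,
and `|s| ≤ d`. Take `ξ` equal to a fixed vector `v` on a block of `M + 2d` consecutive indices.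
On the `M` indices at distance at least `d` from the ends of the block, `p(Ψ_A) ξ` equals
`p(A) v`, so `M ‖p(A) v‖² ≤ ‖p(Ψ_A)‖² (M + 2d) ‖v‖²`. Letting `M → ∞` gives
`‖p(A) v‖ ≤ ‖p(Ψ_A)‖ ‖v‖`.
-/

lemma le_of_forall_nat_mul_le_add_mul {a b c : ℝ} (h : ∀ M : ℕ, M * a ≤ (M + c) * b) : a ≤ b := by
  by_contra! hba
  obtain ⟨M, hM⟩ := exists_nat_gt (c * b / (a - b))
  rw [div_lt_iff₀ (sub_pos.mpr hba)] at hM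
  linarith [h M]

def wordShift {k : ℕ} : List (Fin k × Bool) → ℤ
  | [] => 0
  | (_, b) :: w => (if b then -1 else 1) + wordShift w

lemma abs_wordShift_le_length {k : ℕ} : ∀ w : List (Fin k × Bool), |wordShift w| ≤ w.length
  | [] => by simp [wordShift]
  | (_, b) :: w => by
      have ih := abs_wordShift_le_length w
      have hb : |(if b then (-1 : ℤ) else 1)| = 1 := by cases b <;> simp
      calc |wordShift (_ :: w)| ≤ |(if b then (-1 : ℤ) else 1)| + |wordShift w| := abs_add_le _ _
        _ ≤ (_ :: w).length := by rw [hb, List.length_cons]; omega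

lemma length_le_polyDegree {k : ℕ} {p : List (ℂ × List (Fin k × Bool))}
    {cw : ℂ × List (Fin k × Bool)} (h : cw ∈ p) : cw.2.length ≤ polyDegree p := by
  induction p with
  | nil => cases h
  | cons a t ih =>
      rcases List.mem_cons.mp h with rfl | h
      · exact le_max_left _ _
      · exact (ih h).trans (le_max_right _ _)

section BlockVectors

variable {α : Type*} {H : Type*} [NormedAddCommGroup H]

lemma sum_single_apply [DecidableEq α] (s : Finset α) (v : H) (m : α) :
    (∑ i ∈ s, lp.single 2 i v : lp (fun _ : α => H) 2) m = if m ∈ s then v else 0 := by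
  rw [lp.coeFn_sum, Finset.sum_apply]
  simp [Pi.single_apply]

lemma norm_sum_single_sq [DecidableEq α] (s : Finset α) (v : H) :
    ‖(∑ i ∈ s, lp.single 2 i v : lp (fun _ : α => H) 2)‖ ^ 2 = s.card * ‖v‖ ^ 2 := by
  have h := lp.norm_sum_single (E := fun _ : α => H) (p := 2) (by norm_num) (fun _ => v) s
  simpa [Real.rpow_two] using h

lemma sum_norm_sq_le_norm_sq (ξ : lp (fun _ : α => H) 2) (s : Finset α) :
    ∑ m ∈ s, ‖ξ m‖ ^ 2 ≤ ‖ξ‖ ^ 2 := by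
  have h := lp.sum_rpow_le_norm_rpow (p := 2) (by norm_num) ξ s
  simpa [Real.rpow_two] using h

end BlockVectors

section Shift

variable {H : Type*} [NormedAddCommGroup H]

local notation "ℓ²" => lp (fun _ : ℤ => H) 2

lemma apply_single_of_shift [NormedSpace ℂ H] {S : ℓ² →L[ℂ] ℓ²} {B : H →L[ℂ] H}
    (hS : ∀ ξ n, S ξ n = B (ξ (n - 1))) (n : ℤ) (u : H) :
    S (lp.single 2 n u) = lp.single 2 (n + 1) (B u) := by
  ext m
  rw [hS]
  by_cases h : m = n + 1
  · simp [h]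
  · simp [h, sub_eq_iff_eq_add]

variable [InnerProductSpace ℂ H] [CompleteSpace H]

lemma adjoint_apply_of_shift {S : ℓ² →L[ℂ] ℓ²} {B : H →L[ℂ] H}
    (hS : ∀ ξ n, S ξ n = B (ξ (n - 1))) (ξ : ℓ²) (n : ℤ) :
    adjoint S ξ n = adjoint B (ξ (n + 1)) := by
  refine ext_inner_left ℂ fun u => ?_
  calc inner ℂ u (adjoint S ξ n)
      = inner ℂ (lp.single 2 n u : ℓ²) (adjoint S ξ) :=
        (lp.inner_single_left (G := fun _ : ℤ => H) _ _ _).symm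
    _ = inner ℂ (lp.single 2 (n + 1) (B u) : ℓ²) ξ := by
        rw [adjoint_inner_right, apply_single_of_shift hS]
    _ = inner ℂ u (adjoint B (ξ (n + 1))) := by
        rw [lp.inner_single_left, adjoint_inner_right]

lemma evalWord_shift_apply {Ψ : (H →L[ℂ] H) → ℓ² →L[ℂ] ℓ²}
    (hΨ : ∀ (B : H →L[ℂ] H) (ξ : ℓ²) (n : ℤ), Ψ B ξ n = B (ξ (n - 1))) {k : ℕ}
    (A : Fin k → H →L[ℂ] H) (w : List (Fin k × Bool)) (ξ : ℓ²) (n : ℤ) :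
    evalWord (fun i => Ψ (A i)) w ξ n = evalWord A w (ξ (n - wordShift w)) := by
  induction w generalizing n with
  | nil => simp [evalWord, wordShift]
  | cons ib w ih =>
      obtain ⟨i, b⟩ := ib
      cases b
      · simp only [evalWord, Bool.false_eq_true, ↓reduceIte, mul_def, coe_comp,
          Function.comp_apply]
        rw [hΨ, ih, wordShift, if_neg Bool.false_ne_true, sub_sub]
      · simp only [evalWord, ↓reduceIte, mul_def, coe_comp, Function.comp_apply]
        rw [adjoint_apply_of_shift (hΨ _), ih, wordShift, if_pos rfl, sub_add_eq_sub_sub,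
          sub_neg_eq_add]

lemma evalPoly_shift_apply_of_eqOn {Ψ : (H →L[ℂ] H) → ℓ² →L[ℂ] ℓ²}
    (hΨ : ∀ (B : H →L[ℂ] H) (ξ : ℓ²) (n : ℤ), Ψ B ξ n = B (ξ (n - 1))) {k : ℕ}
    (A : Fin k → H →L[ℂ] H)
    {p : List (ℂ × List (Fin k × Bool))} {d : ℕ} (hd : ∀ cw ∈ p, cw.2.length ≤ d)
    {ξ : ℓ²} {n : ℤ} {v : H} (hξ : ∀ j : ℤ, |j| ≤ d → ξ (n - j) = v) :
    evalPoly (fun i => Ψ (A i)) p ξ n = evalPoly A p v := by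
  induction p with
  | nil => simp [evalPoly]
  | cons cw p ih =>
      have hcw : |wordShift cw.2| ≤ d :=
        (abs_wordShift_le_length cw.2).trans (by exact_mod_cast hd cw List.mem_cons_self)
      simp only [evalPoly, List.map_cons, List.sum_cons] at ih ⊢
      rw [add_apply, lp.coeFn_add, Pi.add_apply, smul_apply, lp.coeFn_smul, Pi.smul_apply,
        evalWord_shift_apply hΨ, hξ _ hcw, ih fun cw' h => hd cw' (List.mem_cons_of_mem _ h),
        add_apply, smul_apply]

lemma nat_mul_norm_evalPoly_apply_sq_le {Ψ : (H →L[ℂ] H) → ℓ² →L[ℂ] ℓ²}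
    (hΨ : ∀ (B : H →L[ℂ] H) (ξ : ℓ²) (n : ℤ), Ψ B ξ n = B (ξ (n - 1))) {k : ℕ}
    (A : Fin k → H →L[ℂ] H) (p : List (ℂ × List (Fin k × Bool))) (v : H) (M : ℕ) :
    M * ‖evalPoly A p v‖ ^ 2
      ≤ (M + 2 * polyDegree p) * (‖evalPoly (fun i => Ψ (A i)) p‖ * ‖v‖) ^ 2 := by
  set d := polyDegree p
  set T := evalPoly (fun i => Ψ (A i)) p
  let ξ : ℓ² := ∑ i ∈ Finset.Ico (0 : ℤ) (M + 2 * d), lp.single 2 i v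
  have hξ : ‖ξ‖ ^ 2 = (M + 2 * d) * ‖v‖ ^ 2 := by
    rw [norm_sum_single_sq, Int.card_Ico, sub_zero]
    norm_cast
  have hTξ : ∀ m ∈ Finset.Ico (d : ℤ) (M + d), T ξ m = evalPoly A p v := by
    intro m hm
    rw [Finset.mem_Ico] at hm
    refine evalPoly_shift_apply_of_eqOn hΨ A (fun cw h => length_le_polyDegree h) fun j hj => ?_
    obtain ⟨hj₁, hj₂⟩ := abs_le.mp hj
    rw [sum_single_apply, if_pos (Finset.mem_Ico.mpr ⟨by omega, by omega⟩)]
  calc (M : ℝ) * ‖evalPoly A p v‖ ^ 2 = ∑ m ∈ Finset.Ico (d : ℤ) (M + d), ‖T ξ m‖ ^ 2 := by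
        rw [Finset.sum_congr rfl fun m hm => by rw [hTξ m hm], Finset.sum_const, Int.card_Ico,
          nsmul_eq_mul]
        simp
    _ ≤ ‖T ξ‖ ^ 2 := sum_norm_sq_le_norm_sq _ _
    _ ≤ (‖T‖ * ‖ξ‖) ^ 2 := pow_le_pow_left₀ (norm_nonneg _) (T.le_opNorm ξ) 2
    _ = (M + 2 * d) * (‖T‖ * ‖v‖) ^ 2 := by rw [mul_pow, hξ]; ring

end Shift

/-- For bounded operators `A₁,…,A_k` on `H` and every *-polynomial `p`,
`‖p(A₁,…,A_k)‖ ≤ ‖p(Ψ_{A₁},…,Ψ_{A_k})‖`, where `(Ψ_A ξ)(n) = A(ξ(n−1))` on `ℓ²(ℤ,H)`. -/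
theorem stmt3 {H : Type} [NormedAddCommGroup H] [InnerProductSpace ℂ H] [CompleteSpace H]
    {k : ℕ} (A : Fin k → H →L[ℂ] H)
    (Ψ : (H →L[ℂ] H) → lp (fun _ : ℤ => H) 2 →L[ℂ] lp (fun _ : ℤ => H) 2)
    (hΨ : ∀ (B : H →L[ℂ] H) (ξ : lp (fun _ : ℤ => H) 2) (n : ℤ), (Ψ B ξ) n = B (ξ (n - 1)))
    (p : List (ℂ × List (Fin k × Bool))) :
    ‖evalPoly A p‖ ≤ ‖evalPoly (fun i => Ψ (A i)) p‖ := by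
  refine opNorm_le_bound _ (norm_nonneg _) fun v => ?_
  have hsq := le_of_forall_nat_mul_le_add_mul (nat_mul_norm_evalPoly_apply_sq_le hΨ A p v)
  exact (pow_le_pow_iff_left₀ (norm_nonneg _) (by positivity) two_ne_zero).mp hsq
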